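/- arXiv:1909.01809 — 3 statements merged into one kernel-verified Lean document; each statement's English description precedes it below -/
import Mathlib

section
/- For a nilpotent endomorphism N on a finite-dimensional vector space V over a field, there exists a unique increasing filtration W_• of V centered at an integer l (i.e. W_{l+k} ⊇ W_{l+k-1}, with W_{l+k}=V for k≫0 and W_{l-k}=0 for k≫0) such that N(W_{l+k}) ⊆ W_{l+k-2} for all k, and N^k induces an isomorphism gr^W_{l+k} V ≅ gr^W_{l-k} V for all k ≥ 0. -/
/-- `W` is the monodromy weight filtration of the nilpotent endomorphism `N`
centered at `l`: an increasing, exhaustive and separated filtration such that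
`N (W j) ⊆ W (j-2)` and `N^k` induces an isomorphism
`gr^W_{l+k} V ≅ gr^W_{l-k} V` for all `k ≥ 0` (the latter is expressed
set-theoretically: `N^k` maps `W (l+k)` to `W (l-k)`, the induced map on the
graded pieces is injective and surjective). -/
def IsMonodromyFiltration {K V : Type*} [Field K] [AddCommGroup V] [Module K V]
    (N : V →ₗ[K] V) (l : ℤ) (W : ℤ → Submodule K V) : Prop :=
  Monotone W ∧
  (∃ k : ℕ, W (l + k) = ⊤) ∧
  (∃ k : ℕ, W (l - k) = ⊥) ∧
  (∀ j : ℤ, ∀ x ∈ W j, N x ∈ W (j - 2)) ∧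
  (∀ k : ℕ,
    (∀ x ∈ W (l + k), (N ^ k) x ∈ W (l - k)) ∧
    (∀ x ∈ W (l + k), (N ^ k) x ∈ W (l - k - 1) → x ∈ W (l + k - 1)) ∧
    (∀ y ∈ W (l - k), ∃ x ∈ W (l + k), y - (N ^ k) x ∈ W (l - k - 1)))

section MonodromyAux

variable {K V : Type*} [Field K] [AddCommGroup V] [Module K V]
  {N : V →ₗ[K] V} {l : ℤ} {W : ℤ → Submodule K V}

private lemma pow_eq_zero_of_le'' {m k : ℕ} (h : m ≤ k) (hm : N ^ m = 0) : N ^ k = 0 := by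
  rw [show k = (k - m) + m from (Nat.sub_add_cancel h).symm, pow_add, hm, mul_zero]

private lemma IsMonodromyFiltration.pow_mem (hW : IsMonodromyFiltration N l W) (t : ℕ)
    {j : ℤ} {x : V} (hx : x ∈ W j) : (N ^ t) x ∈ W (j - 2 * t) := by
  induction t with
  | zero => simpa using hx
  | succ t ih =>
    have h1 : (N ^ (t + 1)) x = N ((N ^ t) x) := by rw [pow_succ', Module.End.mul_apply]
    have h2 := hW.2.2.2.1 _ _ ih
    have h3 : (j - 2 * ((t : ℤ) + 1)) = (j - 2 * t) - 2 := by ring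
    rw [h1, show ((t + 1 : ℕ) : ℤ) = (t : ℤ) + 1 by push_cast; ring, h3]
    exact h2

private lemma IsMonodromyFiltration.top_of_pow_eq_zero (hW : IsMonodromyFiltration N l W)
    {m : ℕ} (hm : N ^ m = 0) : ∀ j : ℤ, l + m - 1 ≤ j → W j = ⊤ := by
  rcases Nat.eq_zero_or_pos m with hm0 | hm1
  · subst hm0
    have hx0 : ∀ x : V, x = 0 := by
      intro x
      have h := congrArg (fun f : V →ₗ[K] V => f x) hm
      simpa using h
    intro j _
    refine le_antisymm le_top fun x _ => ?_
    rw [hx0 x]; exact (W j).zero_mem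
  have step : ∀ k : ℕ, m ≤ k → W (l + k) ≤ W (l + k - 1) := by
    intro k hk x hx
    refine (hW.2.2.2.2 k).2.1 x hx ?_
    rw [pow_eq_zero_of_le'' hk hm]
    simpa using (W (l - k - 1)).zero_mem
  have chain : ∀ t : ℕ, W (l + m - 1 + t) = W (l + m - 1) := by
    intro t
    induction t with
    | zero => simp
    | succ t ih =>
      refine le_antisymm ?_ (hW.1 (by push_cast; omega))
      have h1 := step (m + t) (by omega)
      have e1 : l + ((m + t : ℕ) : ℤ) = l + m - 1 + ((t : ℤ) + 1) := by push_cast; ring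
      have e2 : l + ((m + t : ℕ) : ℤ) - 1 = l + m - 1 + t := by push_cast; ring
      rw [e2, e1] at h1
      rw [show ((t + 1 : ℕ) : ℤ) = (t : ℤ) + 1 by push_cast; ring]
      exact h1.trans ih.le
  obtain ⟨k0, hk0⟩ := hW.2.1
  have htop : W (l + m - 1) = ⊤ := by
    refine le_antisymm le_top ?_
    calc (⊤ : Submodule K V) = W (l + k0) := hk0.symm
    _ ≤ W (l + m - 1 + k0) := hW.1 (by push_cast; omega)
    _ = W (l + m - 1) := chain k0
  intro j hj
  refine le_antisymm le_top ?_
  rw [← htop]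
  exact hW.1 hj

private lemma IsMonodromyFiltration.bot_of_pow_eq_zero (hW : IsMonodromyFiltration N l W)
    {m : ℕ} (hm : N ^ m = 0) : ∀ j : ℤ, j ≤ l - m → W j = ⊥ := by
  rcases Nat.eq_zero_or_pos m with hm0 | hm1
  · subst hm0
    have hx0 : ∀ x : V, x = 0 := by
      intro x
      have h := congrArg (fun f : V →ₗ[K] V => f x) hm
      simpa using h
    intro j _
    refine le_antisymm (fun x _ => ?_) bot_le
    rw [hx0 x]; exact (⊥ : Submodule K V).zero_mem
  have step : ∀ k : ℕ, m ≤ k → W (l - k) ≤ W (l - k - 1) := by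
    intro k hk y hy
    obtain ⟨x, -, hx2⟩ := (hW.2.2.2.2 k).2.2 y hy
    rw [pow_eq_zero_of_le'' hk hm] at hx2
    simpa using hx2
  have chain : ∀ t : ℕ, W (l - m - t) = W (l - m) := by
    intro t
    induction t with
    | zero => simp
    | succ t ih =>
      refine le_antisymm (hW.1 (by push_cast; omega)) ?_
      have h1 := step (m + t) (by omega)
      have e1 : l - ((m + t : ℕ) : ℤ) = l - m - t := by push_cast; ring
      have e2 : l - ((m + t : ℕ) : ℤ) - 1 = l - m - ((t : ℤ) + 1) := by push_cast; ring
      rw [e2, e1] at h1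
      rw [show ((t + 1 : ℕ) : ℤ) = (t : ℤ) + 1 by push_cast; ring]
      exact ih ▸ h1
  obtain ⟨k0, hk0⟩ := hW.2.2.1
  have hbot : W (l - m) = ⊥ := by
    refine le_antisymm ?_ bot_le
    calc W (l - m) = W (l - m - k0) := (chain k0).symm
    _ ≤ W (l - k0) := hW.1 (by push_cast; omega)
    _ = ⊥ := hk0
  intro j hj
  refine le_antisymm ?_ bot_le
  rw [← hbot]
  exact hW.1 hj

end MonodromyAux

private theorem monodromy_key {K : Type*} [Field K] (l : ℤ) (m : ℕ) :
    ∀ {V : Type*} [AddCommGroup V] [Module K V] (N : V →ₗ[K] V), N ^ (m + 1) = 0 →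
      ∃! W : ℤ → Submodule K V, IsMonodromyFiltration N l W := by
  induction m with
  | zero =>
    intro V _ _ N hN1
    have hN0 : N = 0 := by simpa using hN1
    have hmem : ∀ (j : ℤ) (x : V), x ∈ (if l ≤ j then (⊤ : Submodule K V) else ⊥) ↔ l ≤ j ∨ x = 0 := by
      intro j x
      split_ifs with h
      · simp [h]
      · simp [h]
    refine ⟨fun j => if l ≤ j then ⊤ else ⊥, ⟨?_, ⟨0, ?_⟩, ⟨1, ?_⟩, ?_, ?_⟩, ?_⟩
    · intro a b hab
      dsimp only
      split_ifs with h1 h2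
      · exact le_rfl
      · exact absurd (h1.trans hab) h2
      · exact bot_le
      · exact le_rfl
    · norm_num
    · dsimp only; rw [if_neg (by push_cast; omega)]
    · intro j x _
      simp only [hN0, LinearMap.zero_apply, hmem]
      right; trivial
    · intro k
      refine ⟨fun x hx => ?_, fun x hx h2 => ?_, fun y hy => ?_⟩
      · simp only [hmem] at hx ⊢
        rcases Nat.eq_zero_or_pos k with hk0 | hk1
        · subst hk0; simpa using hx
        · right
          rw [pow_eq_zero_of_le'' (by omega : 1 ≤ k) (by simpa using hN1)]
          simp
      · simp only [hmem] at hx h2 ⊢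
        rcases Nat.eq_zero_or_pos k with hk0 | hk1
        · subst hk0
          rcases h2 with h2 | h2
          · left; push_cast at h2 ⊢; omega
          · right; simpa using h2
        · left; push_cast; omega
      · simp only [hmem] at hy ⊢
        rcases Nat.eq_zero_or_pos k with hk0 | hk1
        · subst hk0
          exact ⟨y, by simpa using hy, by simp⟩
        · have hy0 : y = 0 := by
            rcases hy with hy | hy
            · exfalso; push_cast at hy; omega
            · exact hy
          refine ⟨0, by right; rfl, ?_⟩
          simp only [hmem, map_zero]
          right; simp [hy0]
    · intro W' hW'
      funext j
      have h1 := hW'.top_of_pow_eq_zero (m := 1) (by simpa using hN1)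
      have h2 := hW'.bot_of_pow_eq_zero (m := 1) (by simpa using hN1)
      split_ifs with h
      · exact h1 j (by push_cast; omega)
      · exact h2 j (by push_cast; omega)
  | succ m IH =>
    intro V _ _ N hNpow
    obtain ⟨e, he⟩ : ∃ e : ℕ, e = m + 1 := ⟨m + 1, rfl⟩
    have hNe1 : N ^ (e + 1) = 0 := by rw [he]; exact hNpow
    have hpowzero : ∀ k : ℕ, e + 1 ≤ k → N ^ k = 0 := fun k hk => pow_eq_zero_of_le'' hk hNe1
    set B : Submodule K V := LinearMap.ker (N ^ e) with hBdef
    set A : Submodule K V := LinearMap.range (N ^ e) with hAdef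
    have hmemB : ∀ x : V, x ∈ B ↔ (N ^ e) x = 0 := fun x => LinearMap.mem_ker
    have hNeA : ∀ x : V, (N ^ e) x ∈ A := fun x => ⟨x, rfl⟩
    have hN2e : ∀ x : V, (N ^ e) ((N ^ e) x) = 0 := by
      intro x
      have h0 : N ^ (e + e) = 0 := hpowzero _ (by omega)
      have h1 : (N ^ e) ((N ^ e) x) = (N ^ (e + e)) x := by rw [pow_add, Module.End.mul_apply]
      rw [h1, h0, LinearMap.zero_apply]
    
    have hAB : A ≤ B := by
      rintro x ⟨y, rfl⟩
      exact (hmemB _).mpr (hN2e y)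
    have hpowB : ∀ (k : ℕ) (x : V), x ∈ B → (N ^ k) x ∈ B := by
      intro k x hx
      rw [hmemB] at hx ⊢
      have h1 : (N ^ e) ((N ^ k) x) = (N ^ k) ((N ^ e) x) := by
        rw [← Module.End.mul_apply, ← Module.End.mul_apply, ← pow_add, ← pow_add, Nat.add_comm e k]
      rw [h1, hx, map_zero]
    have hNB : ∀ x ∈ B, N x ∈ B := by
      intro x hx
      simpa using hpowB 1 x hx
    set NB : B →ₗ[K] B := N.restrict hNB with hNBdef
    have hNBcoe : ∀ (k : ℕ) (x : B), (((NB ^ k) x : B) : V) = (N ^ k) (x : V) := by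
      intro k
      induction k with
      | zero => intro x; rfl
      | succ k ih =>
        intro x
        have h1 : (NB ^ (k + 1)) x = NB ((NB ^ k) x) := by rw [pow_succ', Module.End.mul_apply]
        have h2 : (N ^ (k + 1)) (x : V) = N ((N ^ k) (x : V)) := by
          rw [pow_succ', Module.End.mul_apply]
        rw [h1, h2, hNBdef, LinearMap.restrict_coe_apply, ih]
    set A' : Submodule K B := A.comap B.subtype with hA'def
    have hmemA' : ∀ x : B, x ∈ A' ↔ (x : V) ∈ A := fun x => Iff.rfl
    set π : B →ₗ[K] (B ⧸ A') := A'.mkQ with hπdef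
    have hπ0 : ∀ x : B, π x = 0 ↔ (x : V) ∈ A := by
      intro x
      rw [hπdef, Submodule.mkQ_apply, Submodule.Quotient.mk_eq_zero]
      exact hmemA' x
    have hπsurj : Function.Surjective π := Submodule.mkQ_surjective A'
    have hπeq : ∀ x y : B, π x = π y ↔ (x : V) - (y : V) ∈ A := by
      intro x y
      rw [hπdef, Submodule.mkQ_apply, Submodule.mkQ_apply, Submodule.Quotient.eq]
      constructor
      · intro h
        simpa using (hmemA' _).mp h
      · intro h
        exact (hmemA' _).mpr (by simpa using h)
    have hNBA' : ∀ x ∈ A', NB x ∈ A' := by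
      intro x hx
      rw [hmemA'] at hx ⊢
      obtain ⟨y, hy⟩ := hx
      refine ⟨N y, ?_⟩
      rw [hNBdef, LinearMap.restrict_coe_apply, ← hy, ← Module.End.mul_apply, ← pow_succ,
        pow_succ', Module.End.mul_apply]
    set NQ : (B ⧸ A') →ₗ[K] (B ⧸ A') := A'.mapQ A' NB (fun x hx => hNBA' x hx) with hNQdef
    have hNQπ : ∀ x : B, NQ (π x) = π (NB x) := by
      intro x
      rw [hπdef, Submodule.mkQ_apply, Submodule.mkQ_apply, hNQdef, Submodule.mapQ_apply]
    have hNQcomm : ∀ (k : ℕ) (x : B), (NQ ^ k) (π x) = π ((NB ^ k) x) := by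
      intro k
      induction k with
      | zero => intro x; rfl
      | succ k ih =>
        intro x
        have h1 : (NQ ^ (k + 1)) (π x) = NQ ((NQ ^ k) (π x)) := by
          rw [pow_succ', Module.End.mul_apply]
        have h2 : (NB ^ (k + 1)) x = NB ((NB ^ k) x) := by rw [pow_succ', Module.End.mul_apply]
        rw [h1, h2, ih, hNQπ]
    have hπpow : ∀ (k : ℕ) (x : B) (h : (N ^ k) (x : V) ∈ B),
        π ⟨(N ^ k) (x : V), h⟩ = (NQ ^ k) (π x) := by
      intro k x h
      rw [hNQcomm]
      congr 1
      exact Subtype.ext (hNBcoe k x).symm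
    have hNQe : NQ ^ (m + 1) = 0 := by
      apply LinearMap.ext
      intro q
      obtain ⟨x, rfl⟩ := hπsurj q
      have h1 : (NQ ^ (m + 1)) (π x) = π ((NB ^ (m + 1)) x) := hNQcomm (m + 1) x
      rw [h1, LinearMap.zero_apply, hπ0, hNBcoe, ← he, (hmemB _).mp x.2]
      exact zero_mem A
    obtain ⟨WQ, hWQ, hWQuniq⟩ := IH NQ hNQe
    have hNQe' : NQ ^ e = 0 := by rw [he]; exact hNQe
    have htopQ : ∀ j : ℤ, l + e - 1 ≤ j → WQ j = ⊤ := hWQ.top_of_pow_eq_zero hNQe'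
    have hbotQ : ∀ j : ℤ, j ≤ l - e → WQ j = ⊥ := hWQ.bot_of_pow_eq_zero hNQe'
    set F : ℤ → Submodule K V := fun j => Submodule.map B.subtype ((WQ j).comap π) with hFdef
    have hFmem1 : ∀ (j : ℤ) (x : B), π x ∈ WQ j → (x : V) ∈ F j := by
      intro j x hx
      simp only [hFdef, Submodule.mem_map, Submodule.mem_comap]
      exact ⟨x, hx, rfl⟩
    have hFmem2 : ∀ (j : ℤ) (x : V), x ∈ F j → ∃ hx : x ∈ B, π ⟨x, hx⟩ ∈ WQ j := by
      intro j x hx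
      simp only [hFdef, Submodule.mem_map, Submodule.mem_comap] at hx
      obtain ⟨y, hy, rfl⟩ := hx
      exact ⟨y.2, hy⟩
    set W : ℤ → Submodule K V := fun j => if l + e ≤ j then ⊤ else if j ≤ l - e - 1 then ⊥ else F j
      with hWdef
    have hWtop : ∀ j : ℤ, l + e ≤ j → W j = ⊤ := by
      intro j h
      show (if l + e ≤ j then ⊤ else if j ≤ l - e - 1 then ⊥ else F j) = ⊤
      rw [if_pos h]
    have hWbot : ∀ j : ℤ, j ≤ l - e - 1 → W j = ⊥ := by
      intro j h
      show (if l + e ≤ j then ⊤ else if j ≤ l - e - 1 then ⊥ else F j) = ⊥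
      rw [if_neg (by omega), if_pos h]
    have hWmid : ∀ j : ℤ, l - e ≤ j → j ≤ l + e - 1 → W j = F j := by
      intro j h1 h2
      show (if l + e ≤ j then ⊤ else if j ≤ l - e - 1 then ⊥ else F j) = F j
      rw [if_neg (by omega), if_neg (by omega)]
    have hWmono : Monotone W := by
      intro a b hab
      rcases le_or_gt (l + e) a with ha | ha
      · rw [hWtop a ha, hWtop b (le_trans ha hab)]
      rcases le_or_gt a (l - e - 1) with ha2 | ha2
      · rw [hWbot a ha2]; exact bot_le
      rcases le_or_gt (l + e) b with hb2 | hb2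
      · rw [hWtop b hb2]; exact le_top
      rw [hWmid a (by omega) (by omega), hWmid b (by omega) (by omega)]
      exact Submodule.map_mono (Submodule.comap_mono (hWQ.1 hab))
    refine ⟨W, ⟨hWmono, ⟨e, hWtop _ le_rfl⟩, ⟨e + 1, hWbot _ (by push_cast; omega)⟩, ?_, ?_⟩, ?_⟩
    · -- shift axiom
      intro j x hx
      rcases le_or_gt (l + e + 2) j with h | h
      · rw [hWtop _ (by omega)]; trivial
      rcases le_or_gt j (l - e - 1) with h2 | h2
      · rw [hWbot _ h2, Submodule.mem_bot] at hx
        rw [hx, map_zero]; exact zero_mem _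
      rcases le_or_gt (l + e) j with h3 | h3
      · -- j = l+e or l+e+1 : show N x ∈ F (j-2) for arbitrary x
        have hNxB : N x ∈ B := by
          rw [hmemB, ← Module.End.mul_apply, ← pow_succ, hNe1, LinearMap.zero_apply]
        rw [hWmid _ (by omega) (by omega)]
        refine hFmem1 _ ⟨N x, hNxB⟩ ?_
        have hmem1 : π ⟨N x, hNxB⟩ ∈ WQ (l + m) := by
          rw [htopQ _ (by omega)]; trivial
        have hmem2 : (NQ ^ m) (π ⟨N x, hNxB⟩) ∈ WQ (l - m - 1) := by
          rw [← hπpow m ⟨N x, hNxB⟩ (hpowB m _ hNxB)]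
          have hz : π ⟨(N ^ m) ((⟨N x, hNxB⟩ : B) : V), hpowB m _ hNxB⟩ = 0 := by
            rw [hπ0]
            show (N ^ m) (N x) ∈ A
            have h4 : (N ^ m) (N x) = (N ^ e) x := by
              rw [← Module.End.mul_apply, ← pow_succ, ← he]
            rw [h4]; exact hNeA x
          rw [hz]; exact zero_mem _
        have hres := (hWQ.2.2.2.2 m).2.1 _ hmem1 hmem2
        exact hWQ.1 (by omega) hres
      rcases le_or_gt (l - e + 2) j with h4 | h4
      · -- middle to middle
        rw [hWmid _ (by omega) (by omega)] at hx
        obtain ⟨hxB, hπx⟩ := hFmem2 _ _ hx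
        rw [hWmid _ (by omega) (by omega)]
        have hNxB : N x ∈ B := hNB x hxB
        refine hFmem1 _ ⟨N x, hNxB⟩ ?_
        have hcoe : (⟨N x, hNxB⟩ : B) = NB ⟨x, hxB⟩ :=
          Subtype.ext (by rw [hNBdef, LinearMap.restrict_coe_apply])
        rw [hcoe, ← hNQπ]
        exact hWQ.2.2.2.1 j _ hπx
      · -- j = l-e or l-e+1 : show N x = 0
        rw [hWmid _ (by omega) (by omega)] at hx
        obtain ⟨hxB, hπx⟩ := hFmem2 _ _ hx
        have hπx' : π ⟨x, hxB⟩ ∈ WQ (l - m) := hWQ.1 (by omega) hπx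
        obtain ⟨q, hq1, hq2⟩ := (hWQ.2.2.2.2 m).2.2 _ hπx'
        rw [hbotQ _ (by omega), Submodule.mem_bot, sub_eq_zero] at hq2
        obtain ⟨y, rfl⟩ := hπsurj q
        rw [← hπpow m y (hpowB m _ y.2)] at hq2
        have h5 : x - (N ^ m) (y : V) ∈ A := (hπeq _ _).mp hq2
        obtain ⟨u, hu⟩ := h5
        have hx0 : N x = 0 := by
          have hxeq : x = (N ^ m) (y : V) + (N ^ e) u := by
            rw [hu]; abel
          rw [hxeq, map_add]
          have e1 : N ((N ^ m) (y : V)) = (N ^ e) (y : V) := by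
            rw [← Module.End.mul_apply, ← pow_succ', ← he]
          have e2 : N ((N ^ e) u) = (N ^ (e + 1)) u := by
            rw [← Module.End.mul_apply, ← pow_succ']
          rw [e1, e2, hNe1, LinearMap.zero_apply, (hmemB _).mp y.2, add_zero]
        rw [hx0]; exact zero_mem _
    · -- the graded iso conditions
      intro k
      rcases Nat.lt_or_ge m k with hk | hk
      · -- k ≥ e
        rcases Nat.eq_or_lt_of_le (show e ≤ k by omega) with hke | hke
        · -- k = e
          subst hke
          refine ⟨fun x _ => ?_, fun x _ h2 => ?_, fun y hy => ?_⟩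
          · rw [hWmid _ le_rfl (by omega)]
            refine hFmem1 _ ⟨(N ^ e) x, (hmemB _).mpr (hN2e x)⟩ ?_
            have hz : π ⟨(N ^ e) x, (hmemB _).mpr (hN2e x)⟩ = 0 := (hπ0 _).mpr (hNeA x)
            rw [hz]; exact zero_mem _
          · rw [hWbot _ (by omega), Submodule.mem_bot] at h2
            rw [hWmid _ (by omega) (by omega)]
            refine hFmem1 _ ⟨x, (hmemB _).mpr h2⟩ ?_
            rw [htopQ _ (by omega)]; trivial
          · rw [hWmid _ le_rfl (by omega)] at hy
            obtain ⟨hyB, hπy⟩ := hFmem2 _ _ hy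
            rw [hbotQ _ le_rfl, Submodule.mem_bot, hπ0] at hπy
            obtain ⟨u, hu⟩ := hπy
            refine ⟨u, by rw [hWtop _ le_rfl]; trivial, ?_⟩
            rw [hu, sub_self]; exact zero_mem _
        · -- k ≥ e + 1
          refine ⟨fun x _ => ?_, fun x _ _ => ?_, fun y hy => ?_⟩
          · rw [hpowzero k (by omega), LinearMap.zero_apply]; exact zero_mem _
          · rw [hWtop _ (by omega)]; trivial
          · rw [hWbot _ (by omega), Submodule.mem_bot] at hy
            refine ⟨0, zero_mem _, ?_⟩
            rw [hy, map_zero, sub_zero]; exact zero_mem _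
      · -- k ≤ m, i.e. k ≤ e - 1
        refine ⟨fun x hx => ?_, fun x hx h2 => ?_, fun y hy => ?_⟩
        · rw [hWmid _ (by omega) (by omega)] at hx
          obtain ⟨hxB, hπx⟩ := hFmem2 _ _ hx
          rw [hWmid _ (by omega) (by omega)]
          refine hFmem1 _ ⟨(N ^ k) x, hpowB k x hxB⟩ ?_
          have h6 : π ⟨(N ^ k) x, hpowB k x hxB⟩ = (NQ ^ k) (π ⟨x, hxB⟩) :=
            hπpow k ⟨x, hxB⟩ (hpowB k x hxB)
          rw [h6]
          exact (hWQ.2.2.2.2 k).1 _ hπx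
        · rw [hWmid _ (by omega) (by omega)] at hx
          obtain ⟨hxB, hπx⟩ := hFmem2 _ _ hx
          rw [hWmid _ (by omega) (by omega)] at h2
          obtain ⟨hNkB, hπNk⟩ := hFmem2 _ _ h2
          have h7 : (NQ ^ k) (π ⟨x, hxB⟩) ∈ WQ (l - k - 1) := by
            rw [← hπpow k ⟨x, hxB⟩ hNkB]
            exact hπNk
          have h8 := (hWQ.2.2.2.2 k).2.1 _ hπx h7
          rw [hWmid _ (by omega) (by omega)]
          exact hFmem1 _ ⟨x, hxB⟩ h8
        · rw [hWmid _ (by omega) (by omega)] at hy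
          obtain ⟨hyB, hπy⟩ := hFmem2 _ _ hy
          obtain ⟨q, hq1, hq2⟩ := (hWQ.2.2.2.2 k).2.2 _ hπy
          obtain ⟨xb, rfl⟩ := hπsurj q
          refine ⟨(xb : V), ?_, ?_⟩
          · rw [hWmid _ (by omega) (by omega)]
            exact hFmem1 _ xb hq1
          · rw [hWmid _ (by omega) (by omega)]
            have hkb : (N ^ k) (xb : V) ∈ B := hpowB k _ xb.2
            have hsub : y - (N ^ k) (xb : V) ∈ B := sub_mem hyB hkb
            refine hFmem1 _ ⟨y - (N ^ k) (xb : V), hsub⟩ ?_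
            have h9 : (⟨y - (N ^ k) (xb : V), hsub⟩ : B) = ⟨y, hyB⟩ - ⟨(N ^ k) (xb : V), hkb⟩ :=
              Subtype.ext (by simp)
            rw [h9, map_sub, hπpow k xb hkb]
            exact hq2
    · -- uniqueness
      intro W' hW'
      have htop' : ∀ j : ℤ, l + e ≤ j → W' j = ⊤ := by
        intro j hj
        exact hW'.top_of_pow_eq_zero hNe1 j (by push_cast; omega)
      have hbot' : ∀ j : ℤ, j ≤ l - e - 1 → W' j = ⊥ := by
        intro j hj
        exact hW'.bot_of_pow_eq_zero hNe1 j (by push_cast; omega)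
      have hW'B : W' (l + e - 1) = B := by
        apply le_antisymm
        · intro x hx
          have h1 := hW'.pow_mem e hx
          rw [hbot' _ (by omega), Submodule.mem_bot] at h1
          exact (hmemB x).mpr h1
        · intro x hx
          refine (hW'.2.2.2.2 e).2.1 x (by rw [htop' _ le_rfl]; trivial) ?_
          rw [hbot' _ (by omega), Submodule.mem_bot]
          exact (hmemB x).mp hx
      have hW'A : W' (l - e) = A := by
        apply le_antisymm
        · intro y hy
          obtain ⟨x, -, hx2⟩ := (hW'.2.2.2.2 e).2.2 y hy
          rw [hbot' _ (by omega), Submodule.mem_bot, sub_eq_zero] at hx2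
          exact hx2 ▸ hNeA x
        · rintro y ⟨x, rfl⟩
          exact (hW'.2.2.2.2 e).1 x (by rw [htop' _ le_rfl]; trivial)
      have hW'leB : ∀ j : ℤ, j ≤ l + e - 1 → W' j ≤ B := fun j hj => (hW'.1 hj).trans hW'B.le
      have hW'geA : ∀ j : ℤ, l - e ≤ j → A ≤ W' j := fun j hj => hW'A ▸ hW'.1 hj
      set WQ' : ℤ → Submodule K (B ⧸ A') := fun j => Submodule.map π ((W' j).comap B.subtype)
        with hWQ'def
      have hQ'mem1 : ∀ (j : ℤ) (x : B), (x : V) ∈ W' j → π x ∈ WQ' j := by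
        intro j x hx
        simp only [hWQ'def, Submodule.mem_map, Submodule.mem_comap]
        exact ⟨x, hx, rfl⟩
      have hQ'mem2 : ∀ (j : ℤ) (q : B ⧸ A'), q ∈ WQ' j →
          ∃ x : B, (x : V) ∈ W' j ∧ π x = q := by
        intro j q hq
        simp only [hWQ'def, Submodule.mem_map, Submodule.mem_comap] at hq
        exact hq
      have hWQ'mono : Monotone WQ' := by
        intro a b hab
        exact Submodule.map_mono (Submodule.comap_mono (hW'.1 hab))
      have hWQ'prop : IsMonodromyFiltration NQ l WQ' := by
        refine ⟨hWQ'mono, ⟨m, ?_⟩, ⟨e, ?_⟩, ?_, ?_⟩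
        · show Submodule.map π ((W' (l + (m : ℕ))).comap B.subtype) = ⊤
          rw [show (l + (m : ℕ) : ℤ) = l + (e : ℕ) - 1 by push_cast; omega, hW'B,
            Submodule.comap_subtype_self, Submodule.map_top, hπdef, Submodule.range_mkQ]
        · show Submodule.map π ((W' (l - (e : ℕ))).comap B.subtype) = ⊥
          rw [hW'A]
          refine le_antisymm ?_ bot_le
          rintro q ⟨x, hx, rfl⟩
          rw [Submodule.mem_bot]
          exact (hπ0 x).mpr hx
        · intro j q hq
          obtain ⟨x, hx, rfl⟩ := hQ'mem2 j q hq
          rw [hNQπ]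
          refine hQ'mem1 _ (NB x) ?_
          rw [hNBdef, LinearMap.restrict_coe_apply]
          exact hW'.2.2.2.1 j _ hx
        · intro k
          refine ⟨fun q hq => ?_, fun q hq h2 => ?_, fun q hq => ?_⟩
          · obtain ⟨x, hx, rfl⟩ := hQ'mem2 _ _ hq
            rw [hNQcomm]
            refine hQ'mem1 _ _ ?_
            rw [hNBcoe]
            exact (hW'.2.2.2.2 k).1 _ hx
          · obtain ⟨x, hx, rfl⟩ := hQ'mem2 _ _ hq
            rcases Nat.lt_or_ge m k with hk | hk
            · refine hQ'mem1 _ x (hW'.1 (show l + (e : ℕ) - 1 ≤ l + (k : ℕ) - 1 by omega)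
                (hW'B.symm ▸ x.2))
            · -- k ≤ m
              rw [hNQcomm] at h2
              obtain ⟨d, hd, hdq⟩ := hQ'mem2 _ _ h2
              have h10 : ((NB ^ k) x : V) - (d : V) ∈ A := (hπeq _ _).mp hdq.symm
              rw [hNBcoe] at h10
              obtain ⟨u, hu⟩ := h10
              have hwmem : (N ^ (e - k)) u ∈ W' (l - e + 2 * k) := by
                have hw := hW'.pow_mem (e - k) (show u ∈ W' (l + e) by
                  rw [htop' _ le_rfl]; trivial)
                rw [show (l + (e : ℕ) - 2 * ((e - k : ℕ) : ℤ)) = l - e + 2 * k by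
                  push_cast [Nat.cast_sub (show k ≤ e by omega)]; ring] at hw
                exact hw
              have hNk : (N ^ k) ((x : V) - (N ^ (e - k)) u) = (d : V) := by
                rw [map_sub, ← Module.End.mul_apply, ← pow_add,
                  show k + (e - k) = e by omega, hu]
                abel
              have hxw : (x : V) - (N ^ (e - k)) u ∈ W' (l + k) :=
                sub_mem hx (hW'.1 (by omega) hwmem)
              have hres := (hW'.2.2.2.2 k).2.1 _ hxw (by rw [hNk]; exact hd)
              have hxmem : (x : V) ∈ W' (l + k - 1) := by
                have hs := add_mem hres (hW'.1 (show l - (e:ℕ) + 2 * (k:ℕ) ≤ l + k - 1 by omega) hwmem)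
                simpa using hs
              exact hQ'mem1 _ x hxmem
          · obtain ⟨y, hy, rfl⟩ := hQ'mem2 _ _ hq
            rcases Nat.lt_or_ge m k with hk | hk
            · have hyA : (y : V) ∈ A := by
                rw [← hW'A]
                exact hW'.1 (show l - (k : ℕ) ≤ l - (e : ℕ) by omega) hy
              refine ⟨0, zero_mem _, ?_⟩
              rw [map_zero, sub_zero, (hπ0 y).mpr hyA]
              exact zero_mem _
            · obtain ⟨x, hx1, hx2⟩ := (hW'.2.2.2.2 k).2.2 _ hy
              have hxB : x ∈ B := hW'leB (l + k) (by omega) hx1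
              refine ⟨π ⟨x, hxB⟩, hQ'mem1 _ _ hx1, ?_⟩
              have hkb : (N ^ k) x ∈ B := hpowB k x hxB
              rw [← hπpow k ⟨x, hxB⟩ hkb]
              have h11 : π y - π ⟨(N ^ k) x, hkb⟩ = π (y - ⟨(N ^ k) x, hkb⟩) := (map_sub π _ _).symm
              rw [h11]
              refine hQ'mem1 _ _ ?_
              have h12 : ((y - ⟨(N ^ k) x, hkb⟩ : B) : V) = (y : V) - (N ^ k) x := by simp
              rw [h12]
              exact hx2
      have hEq : WQ' = WQ := hWQuniq WQ' hWQ'prop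
      funext j
      rcases le_or_gt (l + e) j with h | h
      · rw [htop' j h, hWtop j h]
      rcases le_or_gt j (l - e - 1) with h2 | h2
      · rw [hbot' j h2, hWbot j h2]
      rw [hWmid j (by omega) (by omega)]
      apply le_antisymm
      · intro x hx
        have hxB : x ∈ B := hW'leB j (by omega) hx
        refine hFmem1 j ⟨x, hxB⟩ ?_
        rw [← hEq]
        exact hQ'mem1 j ⟨x, hxB⟩ hx
      · intro x hx
        obtain ⟨hxB, hπx⟩ := hFmem2 j x hx
        rw [← hEq] at hπx
        obtain ⟨c, hc1, hc2⟩ := hQ'mem2 j _ hπx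
        have h13 : (c : V) - x ∈ A := by
          have := (hπeq c ⟨x, hxB⟩).mp hc2
          simpa using this
        have h14 := sub_mem hc1 (hW'geA j (by omega) h13)
        simpa using h14

/-- For a nilpotent endomorphism `N` of a finite-dimensional vector space `V`
and any integer `l`, there is a unique monodromy weight filtration of `N`
centered at `l`. -/
theorem monodromy_weight_filtration_existsUnique
    {K V : Type*} [Field K] [AddCommGroup V] [Module K V] [FiniteDimensional K V]
    (N : V →ₗ[K] V) (hN : IsNilpotent N) (l : ℤ) :
    ∃! W : ℤ → Submodule K V, IsMonodromyFiltration N l W := by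
  obtain ⟨n, hn⟩ := hN
  exact monodromy_key l n N (by rw [pow_succ, hn, zero_mul])
end

section
/- Let A be a commutative ring and let A[[T]]_sr be the A-submodule of A[[T]] generated by 1 and by finite products of series of the form L^a T^b/(1 − L^a T^b) with a ∈ ℤ, b ∈ ℤ_{>0}, where L is an invertible element of A. Then there exists a unique A-linear map lim_{T→∞} : A[[T]]_sr → A sending each such product ∏_i L^{a_i}T^{b_i}/(1 − L^{a_i}T^{b_i}) to (−1)^(number of factors) and sending 1 to 1. -/
open PowerSeries

/-- The power series `L^a T^b / (1 - L^a T^b) = ∑_{m ≥ 1} L^{a m} T^{b m}`,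
for a unit `L` of `A`, `a ∈ ℤ` and `b ∈ ℤ_{>0}`. -/
noncomputable def geomFrac {A : Type*} [CommRing A] (L : Aˣ) (a : ℤ) (b : ℕ+) :
    PowerSeries A :=
  PowerSeries.mk fun n => if (b : ℕ) ∣ n ∧ n ≠ 0 then ((L ^ (a * (n / (b : ℕ) : ℕ)) : Aˣ) : A) else 0

/-- The `A`-submodule `A[[T]]_sr` of `A[[T]]` generated by `1` and by finite
products of series of the form `L^a T^b / (1 - L^a T^b)`. -/
noncomputable def srSubmodule (A : Type*) [CommRing A] (L : Aˣ) :
    Submodule A (PowerSeries A) :=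
  Submodule.span A
    ({1} ∪ {F | ∃ s : Multiset (ℤ × ℕ+), s ≠ 0 ∧
        F = (s.map fun p => geomFrac L p.1 p.2).prod})

/-!
Each product `∏ L^{aᵢ} T^{bᵢ} / (1 - L^{aᵢ} T^{bᵢ})` is the expansion at `T = 0` of an element of
the localization of `A[T]` at the polynomials `1 - c T^b` (`c` a unit, `b > 0`), and this expansion
is injective, so `A⟦T⟧_sr` sits inside that localization. Expanding instead at `T = ∞`, in
`A((T⁻¹))`, each factor `c T^b / (1 - c T^b) = -1 / (1 - c⁻¹ T^{-b})` becomes a power series in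
`T⁻¹` with constant term `-1`, so "constant term at infinity" is a well-defined linear map with the
required values. Uniqueness holds because these products and `1` span `A⟦T⟧_sr`.
-/

namespace SRLimit

open scoped Polynomial

variable {A : Type*} [CommRing A]

theorem coeff_geomFrac_of_lt (L : Aˣ) (a : ℤ) {b : ℕ+} {n : ℕ} (hn : n < b) :
    coeff n (geomFrac L a b) = 0 := by
  rw [geomFrac, coeff_mk, if_neg]
  rintro ⟨hdvd, hn0⟩
  exact hn0 (Nat.eq_zero_of_dvd_of_lt hdvd hn)

theorem coeff_add_geomFrac (L : Aˣ) (a : ℤ) (b : ℕ+) (n : ℕ) :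
    coeff (n + b) (geomFrac L a b) = ((L ^ a : Aˣ) : A) * coeff n (1 + geomFrac L a b) := by
  have hb : (b : ℕ) ≠ 0 := b.ne_zero
  rw [map_add, PowerSeries.coeff_one]
  simp only [geomFrac, coeff_mk, Nat.dvd_add_self_right, Nat.add_div_right n b.pos]
  rcases eq_or_ne n 0 with rfl | hn
  · simp [hb]
  by_cases hdvd : (b : ℕ) ∣ n
  · simp [hdvd, hn, mul_add, zpow_add, mul_comm]
  · simp [hdvd, hn]

theorem geomFrac_eq (L : Aˣ) (a : ℤ) (b : ℕ+) :
    geomFrac L a b = C ((L ^ a : Aˣ) : A) * X ^ (b : ℕ) * (1 + geomFrac L a b) := by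
  ext n
  rw [mul_comm (C _), mul_assoc, coeff_X_pow_mul', coeff_C_mul]
  split_ifs with h
  · rw [← coeff_add_geomFrac, Nat.sub_add_cancel h]
  · exact coeff_geomFrac_of_lt L a (not_le.1 h)

-- Both come from `1 - u = -u (1 - v)` when `v = u⁻¹`.
theorem isUnit_one_sub_of_mul_eq_one {R : Type*} [CommRing R] {u v w : R}
    (huv : u * v = 1) (hw : (1 - v) * w = 1) : IsUnit (1 - u) :=
  IsUnit.of_mul_eq_one (-(v * w)) (by linear_combination w * huv + hw)

theorem eq_one_sub_mul_neg_of_mul_eq_one {R : Type*} [CommRing R] {u v w : R}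
    (huv : u * v = 1) (hw : (1 - v) * w = 1) : u = (1 - u) * -w := by
  linear_combination (-w) * huv - u * hw

theorem constantCoeff_one_sub_C_mul_X_pow (c : A) (b : ℕ+) :
    constantCoeff (1 - C c * X ^ (b : ℕ)) = 1 := by
  simp [b.ne_zero]

noncomputable def invOneSub (c : A) (b : ℕ+) : A⟦X⟧ :=
  invOfUnit (1 - C c * X ^ (b : ℕ)) 1

theorem one_sub_mul_invOneSub (c : A) (b : ℕ+) :
    (1 - C c * X ^ (b : ℕ)) * invOneSub c b = 1 :=
  mul_invOfUnit _ _ (by simp [constantCoeff_one_sub_C_mul_X_pow])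

theorem constantCoeff_invOneSub (c : A) (b : ℕ+) : constantCoeff (invOneSub c b) = 1 := by
  simp [invOneSub, constantCoeff_invOfUnit]

theorem one_sub_ofPowerSeries_mul_invOneSub (c : A) (b : ℕ+) :
    (1 - HahnSeries.ofPowerSeries ℤ A (C c * X ^ (b : ℕ))) *
      HahnSeries.ofPowerSeries ℤ A (invOneSub c b) = 1 := by
  rw [← map_one (HahnSeries.ofPowerSeries ℤ A), ← map_sub, ← map_mul, one_sub_mul_invOneSub,
    map_one]

theorem single_neg_mul_ofPowerSeries (c : Aˣ) (b : ℕ) :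
    HahnSeries.single (-(b : ℤ)) (c : A) * HahnSeries.ofPowerSeries ℤ A (C ((c⁻¹ : Aˣ) : A) * X ^ b)
      = 1 := by
  rw [map_mul, HahnSeries.ofPowerSeries_C, HahnSeries.ofPowerSeries_X_pow, HahnSeries.C_apply,
    HahnSeries.single_mul_single, HahnSeries.single_mul_single]
  simp

theorem isUnit_one_sub_single (c : Aˣ) (b : ℕ+) :
    IsUnit (1 - HahnSeries.single (-(b : ℤ)) (c : A) : LaurentSeries A) :=
  isUnit_one_sub_of_mul_eq_one (single_neg_mul_ofPowerSeries c b)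
    (one_sub_ofPowerSeries_mul_invOneSub _ b)

theorem single_eq_one_sub_mul (c : Aˣ) (b : ℕ+) :
    (HahnSeries.single (-(b : ℤ)) (c : A) : LaurentSeries A) =
      (1 - HahnSeries.single (-(b : ℤ)) (c : A)) *
        HahnSeries.ofPowerSeries ℤ A (-invOneSub ((c⁻¹ : Aˣ) : A) b) := by
  rw [map_neg]
  exact eq_one_sub_mul_neg_of_mul_eq_one (single_neg_mul_ofPowerSeries c b)
    (one_sub_ofPowerSeries_mul_invOneSub _ b)

noncomputable def denominators : Submonoid A[X] :=
  Submonoid.closure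
    (Set.range fun p : Aˣ × ℕ+ => 1 - Polynomial.C (p.1 : A) * Polynomial.X ^ (p.2 : ℕ))

theorem one_sub_mem_denominators (c : Aˣ) (b : ℕ+) :
    1 - Polynomial.C (c : A) * Polynomial.X ^ (b : ℕ) ∈ denominators :=
  Submonoid.subset_closure ⟨(c, b), rfl⟩

theorem isUnit_map_denominators {M F : Type*} [Monoid M] [FunLike F A[X] M]
    [MonoidHomClass F A[X] M] (f : F)
    (hf : ∀ (c : Aˣ) (b : ℕ+), IsUnit (f (1 - Polynomial.C (c : A) * Polynomial.X ^ (b : ℕ))))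
    (y : denominators (A := A)) : IsUnit (f y) := by
  have : denominators ≤ (IsUnit.submonoid M).comap f :=
    Submonoid.closure_le.2 (Set.range_subset_iff.2 fun p => hf p.1 p.2)
  exact this y.2

variable (A) in
abbrev Loc := Localization (denominators (A := A))

noncomputable def frac (c : Aˣ) (b : ℕ+) : Loc A :=
  IsLocalization.mk' (Loc A) (Polynomial.C (c : A) * Polynomial.X ^ (b : ℕ))
    ⟨_, one_sub_mem_denominators c b⟩

noncomputable def toPowerSeries : Loc A →ₐ[A] A⟦X⟧ :=
  IsLocalization.liftAlgHom (f := Polynomial.coeToPowerSeries.algHom A) <|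
    isUnit_map_denominators _ fun c b => by
      simp [PowerSeries.isUnit_iff_constantCoeff, constantCoeff_one_sub_C_mul_X_pow]

theorem aeval_C_mul_X_pow (c : A) (b : ℕ) :
    Polynomial.aeval (HahnSeries.single (-1 : ℤ) (1 : A)) (Polynomial.C c * Polynomial.X ^ b) =
      HahnSeries.single (-(b : ℤ)) c := by
  simp [HahnSeries.single_pow, HahnSeries.algebraMap_apply', HahnSeries.C_apply,
    HahnSeries.single_mul_single]

/-- Expansion at infinity: `X ↦ T⁻¹`. -/
noncomputable def toLaurent : Loc A →ₐ[A] LaurentSeries A :=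
  IsLocalization.liftAlgHom (f := Polynomial.aeval (HahnSeries.single (-1 : ℤ) (1 : A))) <|
    isUnit_map_denominators _ fun c b => by
      simpa [aeval_C_mul_X_pow] using isUnit_one_sub_single c b

theorem toPowerSeries_frac (L : Aˣ) (a : ℤ) (b : ℕ+) :
    toPowerSeries (frac (L ^ a) b) = geomFrac L a b := by
  rw [toPowerSeries, frac, IsLocalization.liftAlgHom_apply, IsLocalization.lift_mk'_spec]
  simp only [AlgHom.toRingHom_eq_coe, RingHom.coe_coe, map_sub, map_one, map_mul, map_pow,
    Polynomial.coeToPowerSeries.algHom_apply, Algebra.algebraMap_self, PowerSeries.map_id,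
    Polynomial.coe_C, Polynomial.coe_X, id_eq]
  linear_combination -geomFrac_eq L a b

theorem toPowerSeries_injective : Function.Injective (toPowerSeries (A := A)) := by
  refine (IsLocalization.lift_injective_iff _).2 fun p q => ⟨fun h => ?_, fun h => ?_⟩
  · simpa [toPowerSeries] using congrArg toPowerSeries h
  · exact congrArg _ (Polynomial.coe_injective A (by simpa using h))

theorem toLaurent_frac (c : Aˣ) (b : ℕ+) :
    toLaurent (frac c b) = HahnSeries.ofPowerSeries ℤ A (-invOneSub ((c⁻¹ : Aˣ) : A) b) := by
  rw [toLaurent, frac, IsLocalization.liftAlgHom_apply, IsLocalization.lift_mk'_spec]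
  simp only [AlgHom.toRingHom_eq_coe, RingHom.coe_coe, map_sub, map_one, aeval_C_mul_X_pow]
  exact single_eq_one_sub_mul c b

theorem toPowerSeries_prod_frac (L : Aˣ) (s : Multiset (ℤ × ℕ+)) :
    toPowerSeries (s.map fun p => frac (L ^ p.1) p.2).prod =
      (s.map fun p => geomFrac L p.1 p.2).prod := by
  simp [map_multiset_prod, Multiset.map_map, toPowerSeries_frac]

theorem toLaurent_prod_frac (s : Multiset (Aˣ × ℕ+)) :
    toLaurent (s.map fun p => frac p.1 p.2).prod = HahnSeries.ofPowerSeries ℤ A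
      (s.map fun p => -invOneSub ((p.1⁻¹ : Aˣ) : A) p.2).prod := by
  simp [map_multiset_prod, Multiset.map_map, toLaurent_frac]

theorem coeff_zero_toLaurent_prod_frac (s : Multiset (Aˣ × ℕ+)) :
    (toLaurent (s.map fun p => frac p.1 p.2).prod).coeff 0 = (-1) ^ Multiset.card s := by
  rw [toLaurent_prod_frac]
  refine (HahnSeries.ofPowerSeries_apply_coeff _ 0).trans ?_
  simp [map_multiset_prod, constantCoeff_invOneSub]

theorem srSubmodule_le_range (L : Aˣ) :
    srSubmodule A L ≤ LinearMap.range (toPowerSeries (A := A)).toLinearMap := by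
  rw [srSubmodule, Submodule.span_le]
  rintro x (rfl | ⟨s, -, rfl⟩)
  · exact ⟨1, map_one toPowerSeries⟩
  · exact ⟨_, toPowerSeries_prod_frac L s⟩

-- Not a composite with `HahnSeries.coeff.linearMap`: the `A`-module structure that `A⸨X⸩` gets
-- from its `A`-algebra structure (which factors through `A⟦X⟧`) is not `HahnSeries.instModule`.
noncomputable def srLimit (L : Aˣ) : srSubmodule A L →ₗ[A] A where
  toFun x := (toLaurent ((LinearEquiv.ofInjective _ toPowerSeries_injective).symm
    (Submodule.inclusion (srSubmodule_le_range L) x))).coeff 0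
  map_add' x y := by simp only [map_add, HahnSeries.coeff_add]
  map_smul' c x := by simp [Algebra.smul_def, HahnSeries.algebraMap_apply']

theorem srLimit_apply {L : Aˣ} (x : srSubmodule A L) {z : Loc A}
    (h : (x : A⟦X⟧) = toPowerSeries z) : srLimit L x = (toLaurent z).coeff 0 := by
  have hz : Submodule.inclusion (srSubmodule_le_range L) x =
      LinearEquiv.ofInjective _ toPowerSeries_injective z :=
    Subtype.ext <| h.trans
      (LinearEquiv.ofInjective_apply (toPowerSeries (A := A)).toLinearMap z).symm
  simp [srLimit, hz]

end SRLimit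

open SRLimit in
/-- There is a unique `A`-linear map `lim_{T→∞} : A[[T]]_sr → A` sending `1` to
`1` and each finite product `∏_i L^{a_i} T^{b_i} / (1 - L^{a_i} T^{b_i})` to
`(-1)^(number of factors)`. -/
theorem limit_existsUnique {A : Type*} [CommRing A] (L : Aˣ) :
    ∃! φ : (srSubmodule A L) →ₗ[A] A,
      (∀ x : srSubmodule A L, (x : PowerSeries A) = 1 → φ x = 1) ∧
      (∀ x : srSubmodule A L, ∀ s : Multiset (ℤ × ℕ+), s ≠ 0 →
        (x : PowerSeries A) = (s.map fun p => geomFrac L p.1 p.2).prod →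
        φ x = (-1 : A) ^ (Multiset.card s)) := by
  have lim_one (x : srSubmodule A L) (hx : (x : A⟦X⟧) = 1) : srLimit L x = 1 := by
    simp [srLimit_apply x (z := 1) (by rw [hx, map_one])]
  have lim_prod (x : srSubmodule A L) (s : Multiset (ℤ × ℕ+))
      (hx : (x : A⟦X⟧) = (s.map fun p => geomFrac L p.1 p.2).prod) :
      srLimit L x = (-1) ^ Multiset.card s := by
    rw [srLimit_apply x (hx.trans (toPowerSeries_prod_frac L s).symm)]
    simpa [Multiset.map_map] using coeff_zero_toLaurent_prod_frac (s.map fun p => (L ^ p.1, p.2))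
  refine ⟨srLimit L, ⟨lim_one, fun x s _ hx => lim_prod x s hx⟩, ?_⟩
  rintro ψ ⟨hψ_one, hψ_prod⟩
  refine LinearMap.ext_on Submodule.span_span_coe_preimage ?_
  rintro x (hx | ⟨s, hs, hx⟩)
  · rw [hψ_one x hx, lim_one x hx]
  · rw [hψ_prod x s hs hx, lim_prod x s hx]
end

section
/- Let I be a finite set and Δ ⊂ ℝ_{>0}^I a rational polyhedral convex cone defined by the inequality Σ_{i∈K} a_i x_i ≤ Σ_{i∈I∖K} a_i x_i, where a_i ∈ ℤ_{≥0} for all i, a_i > 0 for i ∈ K, and both K and I∖K are non-empty subsets of I. Then the Euler characteristic with compact support of Δ is zero. -/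
open Real Set Function



lemma restr_update {α : Type*} [DecidableEq α] {j : α} (g : α → ℝ) (c : ℝ)
    (i' : {i : α // i ≠ j}) : Function.update g j c i'.1 = g i'.1 :=
  Function.update_of_ne i'.2 _ _

/-- A "ray over the positive orthant" set is homeomorphic to the full space. -/
noncomputable def rayHomeo {α : Type*} [Fintype α] [DecidableEq α] (j : α)
    (f : ({i : α // i ≠ j} → ℝ) → ℝ) (hf : Continuous f) (hf0 : ∀ y, 0 ≤ f y) :
    {x : α → ℝ | (∀ i, i ≠ j → 0 < x i) ∧ f (fun i' => x i'.1) < x j} ≃ₜ (α → ℝ) where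
  toFun x := Function.update (fun i => Real.log (x.1 i)) j
    (Real.log (x.1 j - f (fun i' => x.1 i'.1)))
  invFun y := ⟨Function.update (fun i => Real.exp (y i)) j
      (f (fun i' => Real.exp (y i'.1)) + Real.exp (y j)), by
    refine ⟨fun i hi => ?_, ?_⟩
    · rw [Function.update_of_ne hi]; exact Real.exp_pos _
    · simp only [restr_update, Function.update_self]
      linarith [Real.exp_pos (y j)]⟩
  left_inv x := by
    obtain ⟨hx1, hx2⟩ := x.2
    have hxj : 0 < x.1 j := lt_of_le_of_lt (hf0 _) hx2
    apply Subtype.ext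
    funext i
    simp only [restr_update, Function.update_self]
    have hE : (fun i' : {i : α // i ≠ j} => Real.exp (Real.log (x.1 i'.1)))
        = fun i' => x.1 i'.1 := funext fun i' => Real.exp_log (hx1 i'.1 i'.2)
    by_cases hi : i = j
    · rw [hi, Function.update_self, hE, Real.exp_log (by linarith)]
      ring
    · rw [Function.update_of_ne hi, Function.update_of_ne hi]
      exact Real.exp_log (hx1 i hi)
  right_inv y := by
    funext i
    simp only [restr_update, Function.update_self]
    by_cases hi : i = j
    · rw [hi, Function.update_self, add_sub_cancel_left, Real.log_exp]
    · rw [Function.update_of_ne hi, Function.update_of_ne hi, Real.log_exp]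
  continuous_toFun := by
    have hpos : ∀ (x : {x : α → ℝ | (∀ i, i ≠ j → 0 < x i) ∧ f (fun i' => x i'.1) < x j})
        (i : α), 0 < x.1 i := by
      intro x i
      by_cases hi : i = j
      · rw [hi]; exact lt_of_le_of_lt (hf0 _) x.2.2
      · exact x.2.1 i hi
    apply Continuous.update
    · apply continuous_pi
      intro i
      exact (((continuous_apply i).comp continuous_subtype_val).log
        (fun x => ne_of_gt (hpos x i)))
    · apply Continuous.log
      · exact ((continuous_apply j).comp continuous_subtype_val).sub
          (hf.comp (continuous_pi fun i' => (continuous_apply i'.1).comp continuous_subtype_val))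
      · intro x
        have := x.2.2
        exact sub_ne_zero_of_ne (ne_of_gt this)
  continuous_invFun := by
    apply Continuous.subtype_mk
    apply Continuous.update
    · exact continuous_pi fun i => Real.continuous_exp.comp (continuous_apply i)
    · exact (hf.comp (continuous_pi fun i' =>
        Real.continuous_exp.comp (continuous_apply i'.1))).add
        (Real.continuous_exp.comp (continuous_apply j))

/-- Eliminating a coordinate given by a graph condition. -/
noncomputable def graphHomeo {α : Type*} [Fintype α] [DecidableEq α] (j : α)
    (P : ({i : α // i ≠ j} → ℝ) → Prop) (g : ({i : α // i ≠ j} → ℝ) → ℝ) (hg : Continuous g) :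
    {x : α → ℝ | P (fun i' => x i'.1) ∧ x j = g (fun i' => x i'.1)} ≃ₜ {y | P y} where
  toFun x := ⟨fun i' => x.1 i'.1, x.2.1⟩
  invFun y := ⟨fun i => if h : i = j then g y.1 else y.1 ⟨i, h⟩, by
    have hE : (fun i' : {i : α // i ≠ j} =>
        if h : i'.1 = j then g y.1 else y.1 ⟨i'.1, h⟩) = fun i' => y.1 i' := by
      funext i'; rw [dif_neg i'.2]
    refine ⟨?_, ?_⟩
    · simp only []
      rw [hE]; exact y.2
    · simp only []
      rw [hE, dif_pos trivial]⟩
  left_inv x := by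
    apply Subtype.ext
    funext i
    simp only []
    by_cases hi : i = j
    · rw [dif_pos hi, hi]
      exact x.2.2.symm
    · rw [dif_neg hi]
  right_inv y := by
    apply Subtype.ext
    funext i'
    simp only [dif_neg i'.2]
  continuous_toFun := by
    apply Continuous.subtype_mk
    exact continuous_pi fun i' => (continuous_apply i'.1).comp continuous_subtype_val
  continuous_invFun := by
    apply Continuous.subtype_mk
    apply continuous_pi
    intro i
    by_cases hi : i = j
    · simp only [dif_pos hi]
      exact hg.comp continuous_subtype_val
    · simp only [dif_neg hi]
      exact (continuous_apply (⟨i, hi⟩ : {i : α // i ≠ j})).comp continuous_subtype_val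

lemma sum_subtype_ne {β : Type*} [Fintype β] [DecidableEq β] (j : β) (F : β → ℝ) :
    ∑ i : {i : β // i ≠ j}, F i.1 = ∑ i, F i - F j := by
  rw [eq_sub_iff_add_eq, ← Finset.sum_erase_add Finset.univ F (Finset.mem_univ j)]
  congr 1
  exact (Finset.sum_subtype _ (by simp) F).symm


/-- Let `Δ ⊂ ℝ_{>0}^I` be the rational polyhedral convex cone defined by
`∑_{i∈K} a_i x_i ≤ ∑_{i∉K} a_i x_i`, where `a_i ∈ ℤ_{≥0}`, `a_i > 0` for
`i ∈ K`, and both `K` and its complement are non-empty. Then the Euler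
characteristic with compact support of `Δ` is zero. Here `χ` is any integer
valued invariant that is additive on disjoint unions, vanishes on the empty
set, and takes the value `(-1)^d` on any set homeomorphic to `ℝ^d` (these are
the defining properties of the compactly supported Euler characteristic on
semialgebraic sets). -/
theorem eulerCharCompact_cone_eq_zero
    {I : Type*} [Fintype I] (K : Set I) [DecidablePred (· ∈ K)]
    (hK : K.Nonempty) (hKc : Kᶜ.Nonempty)
    (a : I → ℤ) (ha : ∀ i, 0 ≤ a i) (haK : ∀ i ∈ K, 0 < a i)
    (χ : Set (I → ℝ) → ℤ)
    (hχ_empty : χ (∅ : Set (I → ℝ)) = 0)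
    (hχ_add : ∀ A B : Set (I → ℝ), Disjoint A B → χ (A ∪ B) = χ A + χ B)
    (hχ_cell : ∀ (S : Set (I → ℝ)) (d : ℕ),
        Nonempty (S ≃ₜ (Fin d → ℝ)) → χ S = (-1 : ℤ) ^ d) :
    χ {x : I → ℝ | (∀ i, 0 < x i) ∧
        ∑ i ∈ Finset.univ.filter (· ∈ K), (a i : ℝ) * x i ≤
          ∑ i ∈ Finset.univ.filter (· ∉ K), (a i : ℝ) * x i} = 0 := by
  classical
  obtain ⟨k, hk⟩ := hK
  by_cases hexj : ∃ j, j ∉ K ∧ 0 < a j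
  · obtain ⟨j, hjK, haj⟩ := hexj
    have hajR : (0:ℝ) < (a j : ℝ) := by exact_mod_cast haj
    have hakR : (0:ℝ) < (a k : ℝ) := by exact_mod_cast haK k hk
    have hkj : k ≠ j := fun h => hjK (h ▸ hk)
    set c : I → ℝ := fun i => if i ∈ K then (a i : ℝ) else -(a i : ℝ) with hc
    set SK : (I → ℝ) → ℝ := fun x => ∑ i ∈ Finset.univ.filter (· ∈ K), (a i : ℝ) * x i with hSK
    set SC : (I → ℝ) → ℝ := fun x => ∑ i ∈ Finset.univ.filter (· ∉ K), (a i : ℝ) * x i with hSC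
    have hsum : ∀ x : I → ℝ, ∑ i' : {i : I // i ≠ j}, c i'.1 * x i'.1 =
        SK x - SC x + (a j : ℝ) * x j := by
      intro x
      rw [sum_subtype_ne j (fun i => c i * x i)]
      have huniv : ∑ i, c i * x i = SK x - SC x := by
        rw [← Finset.sum_filter_add_sum_filter_not Finset.univ (· ∈ K) (fun i => c i * x i)]
        have e1 : ∑ i ∈ Finset.univ.filter (· ∈ K), c i * x i = SK x :=
          Finset.sum_congr rfl fun i hi => by
            rw [Finset.mem_filter] at hi
            simp [hc, hi.2]
        have e2 : ∑ i ∈ Finset.univ.filter (fun i => ¬ (i ∈ K)), c i * x i = -SC x := by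
          rw [hSC, ← Finset.sum_neg_distrib]
          refine Finset.sum_congr (by simp) fun i hi => ?_
          rw [Finset.mem_filter] at hi
          simp [hc, hi.2]
        rw [e1, e2]
        ring
      have hcj : c j = -(a j : ℝ) := by simp [hc, hjK]
      rw [huniv, hcj]
      ring
    -- the two pieces
    set Δlt : Set (I → ℝ) := {x | (∀ i, 0 < x i) ∧ SK x < SC x} with hΔlt
    set Δeq : Set (I → ℝ) := {x | (∀ i, 0 < x i) ∧ SK x = SC x} with hΔeq
    -- data for the ray description of Δlt
    set f1 : ({i : I // i ≠ j} → ℝ) → ℝ :=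
      fun y => max 0 ((∑ i' : {i : I // i ≠ j}, c i'.1 * y i') / (a j : ℝ)) with hf1def
    have hf1 : Continuous f1 := by
      apply continuous_const.max
      exact (continuous_finset_sum _ fun i' _ => continuous_const.mul (continuous_apply i')).div_const _
    have hf10 : ∀ y, 0 ≤ f1 y := fun y => le_max_left _ _
    have heq_lt : Δlt = {x : I → ℝ | (∀ i, i ≠ j → 0 < x i) ∧ f1 (fun i' => x i'.1) < x j} := by
      ext x
      simp only [hΔlt, Set.mem_setOf_eq, hf1def, max_lt_iff]
      have hs := hsum x
      have hcomm : x j * (a j : ℝ) = (a j : ℝ) * x j := mul_comm _ _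
      constructor
      · rintro ⟨hx, hlt⟩
        refine ⟨fun i _ => hx i, hx j, ?_⟩
        rw [div_lt_iff₀ hajR]
        linarith
      · rintro ⟨hx, h0j, hdiv⟩
        rw [div_lt_iff₀ hajR] at hdiv
        refine ⟨fun i => ?_, by linarith⟩
        by_cases hi : i = j
        · rw [hi]; exact h0j
        · exact hx i hi
    -- data for the graph description of Δeq
    set g1 : ({i : I // i ≠ j} → ℝ) → ℝ :=
      fun y => (∑ i' : {i : I // i ≠ j}, c i'.1 * y i') / (a j : ℝ) with hg1def
    have hg1 : Continuous g1 :=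
      (continuous_finset_sum _ fun i' _ => continuous_const.mul (continuous_apply i')).div_const _
    set P1 : ({i : I // i ≠ j} → ℝ) → Prop :=
      fun y => (∀ i', 0 < y i') ∧ 0 < ∑ i' : {i : I // i ≠ j}, c i'.1 * y i' with hP1def
    have heq_eq : Δeq = {x : I → ℝ | P1 (fun i' => x i'.1) ∧ x j = g1 (fun i' => x i'.1)} := by
      ext x
      simp only [hΔeq, Set.mem_setOf_eq, hP1def, hg1def]
      have hs := hsum x
      have hcomm : x j * (a j : ℝ) = (a j : ℝ) * x j := mul_comm _ _
      constructor
      · rintro ⟨hx, heq⟩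
        have hT : (0:ℝ) < ∑ i' : {i : I // i ≠ j}, c i'.1 * x i'.1 := by
          rw [hs]
          have := mul_pos hajR (hx j)
          linarith
        refine ⟨⟨fun i' => hx i'.1, hT⟩, ?_⟩
        rw [eq_div_iff (ne_of_gt hajR)]
        linarith
      · rintro ⟨⟨hx', hT⟩, hxj⟩
        rw [eq_div_iff (ne_of_gt hajR)] at hxj
        have hSKSC : SK x = SC x := by linarith
        refine ⟨fun i => ?_, hSKSC⟩
        by_cases hi : i = j
        · rw [hi]
          have : (a j : ℝ) * x j = ∑ i' : {i : I // i ≠ j}, c i'.1 * x i'.1 := by linarith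
          nlinarith
        · exact hx' ⟨i, hi⟩
    -- ray description of {y | P1 y}
    set k' : {i : I // i ≠ j} := ⟨k, hkj⟩ with hk'def
    set f2 : ({i' : {i : I // i ≠ j} // i' ≠ k'} → ℝ) → ℝ :=
      fun z => max 0 ((-(∑ i'' : {i' : {i : I // i ≠ j} // i' ≠ k'}, c i''.1.1 * z i'')) / (a k : ℝ)) with hf2def
    have hf2 : Continuous f2 := by
      apply continuous_const.max
      exact ((continuous_finset_sum _ fun i'' _ =>
        continuous_const.mul (continuous_apply i'')).neg).div_const _
    have hf20 : ∀ z, 0 ≤ f2 z := fun z => le_max_left _ _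
    have hsum2 : ∀ y : {i : I // i ≠ j} → ℝ,
        ∑ i'' : {i' : {i : I // i ≠ j} // i' ≠ k'}, c i''.1.1 * y i''.1 =
          (∑ i' : {i : I // i ≠ j}, c i'.1 * y i') - c k * y k' :=
      fun y => sum_subtype_ne k' (fun i' => c i'.1 * y i')
    have hck : c k = (a k : ℝ) := by simp [hc, hk]
    have heq_P : {y : {i : I // i ≠ j} → ℝ | P1 y} =
        {y : {i : I // i ≠ j} → ℝ | (∀ i', i' ≠ k' → 0 < y i') ∧ f2 (fun i'' => y i''.1) < y k'} := by
      ext y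
      simp only [Set.mem_setOf_eq, hP1def, hf2def, max_lt_iff]
      have hs2 := hsum2 y
      rw [hck] at hs2
      have hcomm : y k' * (a k : ℝ) = (a k : ℝ) * y k' := mul_comm _ _
      constructor
      · rintro ⟨hy, hS⟩
        refine ⟨fun i' _ => hy i', hy k', ?_⟩
        rw [div_lt_iff₀ hakR]
        linarith
      · rintro ⟨hy, h0k, hdiv⟩
        rw [div_lt_iff₀ hakR] at hdiv
        refine ⟨fun i' => ?_, by linarith⟩
        by_cases hi : i' = k'
        · rw [hi]; exact h0k
        · exact hy i' hi
    -- split the set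
    have hunion : {x : I → ℝ | (∀ i, 0 < x i) ∧ SK x ≤ SC x} = Δlt ∪ Δeq := by
      ext x
      simp only [hΔlt, hΔeq, Set.mem_setOf_eq, Set.mem_union, ← and_or_left]
      exact and_congr_right fun _ => le_iff_lt_or_eq
    have hdisj : Disjoint Δlt Δeq :=
      Set.disjoint_left.mpr fun x hx hx' => (ne_of_lt hx.2) hx'.2
    have hcard : Fintype.card I = Fintype.card {i : I // i ≠ j} + 1 := by
      have h1 : Fintype.card {i : I // i = j} = 1 := Fintype.card_subtype_eq j
      have h2 : Fintype.card {i : I // ¬ i = j} =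
          Fintype.card I - Fintype.card {i : I // i = j} :=
        Fintype.card_subtype_compl _
      have h3 : 0 < Fintype.card I := Fintype.card_pos_iff.mpr ⟨j⟩
      have h4 : Fintype.card {i : I // i ≠ j} = Fintype.card {i : I // ¬ i = j} := rfl
      omega
    have h1 : χ Δlt = (-1 : ℤ) ^ (Fintype.card I) := by
      refine hχ_cell _ _ ⟨(Homeomorph.setCongr heq_lt).trans
        ((rayHomeo j f1 hf1 hf10).trans
        (Homeomorph.piCongrLeft (Y := fun _ : Fin (Fintype.card I) => ℝ) (Fintype.equivFin I)))⟩
    have h2 : χ Δeq = (-1 : ℤ) ^ (Fintype.card {i : I // i ≠ j}) := by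
      refine hχ_cell _ _ ⟨(Homeomorph.setCongr heq_eq).trans
        ((graphHomeo j P1 g1 hg1).trans ((Homeomorph.setCongr heq_P).trans
        ((rayHomeo k' f2 hf2 hf20).trans
        (Homeomorph.piCongrLeft (Y := fun _ : Fin (Fintype.card {i : I // i ≠ j}) => ℝ)
          (Fintype.equivFin {i : I // i ≠ j})))))⟩
    calc χ {x : I → ℝ | (∀ i, 0 < x i) ∧ SK x ≤ SC x}
        = χ Δlt + χ Δeq := by rw [hunion, hχ_add _ _ hdisj]
      _ = 0 := by rw [h1, h2, hcard, pow_succ]; ring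
  · -- the set is empty
    have hΔ : {x : I → ℝ | (∀ i, 0 < x i) ∧
        ∑ i ∈ Finset.univ.filter (· ∈ K), (a i : ℝ) * x i ≤
          ∑ i ∈ Finset.univ.filter (· ∉ K), (a i : ℝ) * x i} = ∅ := by
      ext x
      simp only [Set.mem_setOf_eq, Set.mem_empty_iff_false, iff_false, not_and]
      intro hx hle
      have h1 : ∑ i ∈ Finset.univ.filter (· ∉ K), (a i : ℝ) * x i = 0 := by
        apply Finset.sum_eq_zero
        intro i hi
        rw [Finset.mem_filter] at hi
        have : a i = 0 :=
          le_antisymm (not_lt.mp fun h => hexj ⟨i, hi.2, h⟩) (ha i)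
        simp [this]
      have h2 : 0 < ∑ i ∈ Finset.univ.filter (· ∈ K), (a i : ℝ) * x i := by
        apply Finset.sum_pos'
        · intro i hi
          exact mul_nonneg (by exact_mod_cast ha i) (hx i).le
        · exact ⟨k, Finset.mem_filter.mpr ⟨Finset.mem_univ _, hk⟩,
            mul_pos (by exact_mod_cast haK k hk) (hx k)⟩
      linarith
    rw [hΔ]
    exact hχ_empty
end
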